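/- arXiv:2107.00697 — 2 statements merged into one kernel-verified Lean document; each statement's English description precedes it below -/
import Mathlib

section
/- Let A be a simple selfadjoint operator and \delta a cyclic vector of A. The orthonormal basis \{\delta_k\} obtained by the Gram–Schmidt procedure applied to \{A^{k-1}\delta\}_{k=1}^\infty is a basis of representation for A if and only if the closed linear span of \{(A - iI) A^{k-1}\delta : k \in \mathbb{N}\} equals the whole Hilbert space. -/
open scoped InnerProductSpace

/-- An orthonormal basis `e` of the Hilbert space `H` is a *basis of representation*
for a (closed) operator `A` when (a) each `e k` lies in the domain of `A`, and
(b) any closed operator `B` agreeing with `A` on all the `e k` extends `A`. -/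
def IsBasisOfRepresentation {H : Type*} [NormedAddCommGroup H]
    [InnerProductSpace ℂ H] (A : H →ₗ.[ℂ] H) (e : ℕ → H) : Prop :=
  Orthonormal ℂ e ∧ Dense (↑(Submodule.span ℂ (Set.range e)) : Set H) ∧
  (∀ k, e k ∈ A.domain) ∧
  ∀ B : H →ₗ.[ℂ] H, IsClosed (B.graph : Set (H × H)) →
    (∀ k y, (e k, y) ∈ A.graph → (e k, y) ∈ B.graph) → A ≤ B

/-!
The graph vectors `(A^k δ, A^{k+1} δ)` and `(δ_k, A δ_k)` span the same subspace `g` of the graph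
of `A`, since the change of basis is triangular with nonzero diagonal. Being a basis of
representation therefore means that `g` is a core, i.e. its closure is the whole graph. For
selfadjoint `A` the map `(x, A x) ↦ (A - i) x` is onto `H` and bounded below on the graph, because
`‖(A - i) x‖² = ‖A x‖² + ‖x‖²`; so `g` is dense in the graph exactly when its image, the span of the
`(A - i) A^k δ`, is dense in `H`.
-/

open Set Submodule LinearPMap Complex

theorem Submodule.span_range_eq_of_triangular {K M : Type*} [Field K] [AddCommGroup M]
    [Module K M] (u e : ℕ → M) (c : ℕ → ℕ → K) (hc : ∀ k, c k k ≠ 0)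
    (he : ∀ k, e k = ∑ j ∈ Finset.range (k + 1), c k j • u j) :
    span K (range e) = span K (range u) := by
  refine le_antisymm (span_le.2 <| range_subset_iff.2 fun k => ?_)
    (span_le.2 <| range_subset_iff.2 fun k => ?_)
  · rw [he k]
    exact sum_mem fun j _ => smul_mem _ _ (subset_span ⟨j, rfl⟩)
  · induction k using Nat.strong_induction_on with
    | _ k ih =>
      have hk : u k = (c k k)⁻¹ • (e k - ∑ j ∈ Finset.range k, c k j • u j) := by
        rw [he k, Finset.sum_range_succ, add_sub_cancel_left, smul_smul, inv_mul_cancel₀ (hc k),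
          one_smul]
      rw [hk]
      exact smul_mem _ _ <| sub_mem (subset_span ⟨k, rfl⟩) <|
        sum_mem fun j hj => smul_mem _ _ (ih j (Finset.mem_range.1 hj))

theorem LinearPMap.span_range_le_graph_iff {R E F : Type*} [Ring R] [AddCommGroup E]
    [AddCommGroup F] [Module R E] [Module R F] {A B : E →ₗ.[R] F} {ι : Type*} {e : ι → E × F}
    (he : ∀ k, e k ∈ A.graph) :
    span R (range e) ≤ B.graph ↔ ∀ k y, ((e k).1, y) ∈ A.graph → ((e k).1, y) ∈ B.graph := by
  refine ⟨fun h k y hy => ?_, fun h => span_le.2 <| range_subset_iff.2 fun k => h k _ (he k)⟩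
  rw [A.mem_graph_snd_inj hy (he k) rfl]
  exact h (subset_span ⟨k, rfl⟩)

section Closure

variable {R E F : Type*} [CommRing R] [AddCommGroup E] [AddCommGroup F] [Module R E]
  [Module R F] [TopologicalSpace E] [TopologicalSpace F] [ContinuousAdd E] [ContinuousAdd F]
  [ContinuousConstSMul R E] [ContinuousConstSMul R F]

theorem LinearPMap.graph_le_topologicalClosure_iff {A : E →ₗ.[R] F} (hA : A.IsClosed)
    {g : Submodule R (E × F)} (hg : g ≤ A.graph) :
    A.graph ≤ g.topologicalClosure ↔ ∀ B : E →ₗ.[R] F, B.IsClosed → g ≤ B.graph → A ≤ B := by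
  refine ⟨fun h B hB hgB => le_of_le_graph <| h.trans (g.topologicalClosure_minimal hgB hB),
    fun h => ?_⟩
  have hclA : g.topologicalClosure ≤ A.graph := g.topologicalClosure_minimal hg hA
  have hgraph : g.topologicalClosure.toLinearPMap.graph = g.topologicalClosure :=
    toLinearPMap_graph_eq _ fun x hx hx1 => A.graph_fst_eq_zero_snd (hclA hx) hx1
  have hclosed : g.topologicalClosure.toLinearPMap.IsClosed := by
    rw [LinearPMap.IsClosed, hgraph]
    exact g.isClosed_topologicalClosure
  have hext := le_graph_of_le <| h _ hclosed (hgraph.symm ▸ g.le_topologicalClosure)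
  rwa [hgraph] at hext

end Closure

section BoundedBelow

variable {𝕜 E F : Type*} [NontriviallyNormedField 𝕜] [NormedAddCommGroup E] [NormedSpace 𝕜 E]
  [CompleteSpace E] [NormedAddCommGroup F] [NormedSpace 𝕜 F]

theorem Submodule.isClosed_map_of_le_norm {m : Submodule 𝕜 E} (hm : IsClosed (m : Set E))
    (T : E →L[𝕜] F) {K : NNReal} (hT : ∀ p ∈ m, ‖p‖ ≤ K * ‖T p‖) :
    IsClosed (m.map (T : E →ₗ[𝕜] F) : Set F) := by
  have : CompleteSpace m := hm.completeSpace_coe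
  have hanti := (T.comp m.subtypeL).antilipschitz_of_bound fun p => hT p p.2
  have hclosed := hanti.isClosed_range (T.comp m.subtypeL).uniformContinuous
  have hrange : range (T.comp m.subtypeL) = (m.map (T : E →ₗ[𝕜] F) : Set F) := by
    ext; simp
  rwa [hrange] at hclosed

theorem Submodule.le_topologicalClosure_iff_dense_map {G g : Submodule 𝕜 E}
    (hG : IsClosed (G : Set E)) (hg : g ≤ G) (T : E →L[𝕜] F) {K : NNReal}
    (hT : ∀ p ∈ G, ‖p‖ ≤ K * ‖T p‖) (hGT : G.map (T : E →ₗ[𝕜] F) = ⊤) :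
    G ≤ g.topologicalClosure ↔ Dense (g.map (T : E →ₗ[𝕜] F) : Set F) := by
  have hclG : g.topologicalClosure ≤ G := g.topologicalClosure_minimal hg hG
  constructor
  · intro h
    rw [dense_iff_topologicalClosure_eq_top, eq_top_iff, ← hGT]
    refine (map_mono h).trans fun y hy => ?_
    obtain ⟨p, hp, rfl⟩ := mem_map.1 hy
    exact map_mem_closure T.continuous hp fun q hq => mem_map_of_mem hq
  · intro hdense p hp
    have hclosed := isClosed_map_of_le_norm g.isClosed_topologicalClosure T
      fun q hq => hT q (hclG hq)
    have htop : g.topologicalClosure.map (T : E →ₗ[𝕜] F) = ⊤ := by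
      refine eq_top_iff'.2 fun y => ?_
      rw [← SetLike.mem_coe, ← hclosed.closure_eq]
      exact closure_mono (map_mono g.le_topologicalClosure) (hdense.closure_eq ▸ mem_univ y)
    obtain ⟨q, hq, hTq⟩ : T p ∈ g.topologicalClosure.map (T : E →ₗ[𝕜] F) := htop ▸ mem_top
    replace hTq : T q = T p := hTq
    have hpq : ‖p - q‖ ≤ K * ‖T (p - q)‖ := hT _ (sub_mem hp (hclG hq))
    rw [_root_.map_sub, hTq, sub_self, norm_zero, mul_zero, norm_le_zero_iff, sub_eq_zero] at hpq
    exact hpq ▸ hq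

end BoundedBelow

/-- On the graph of an operator `A`, this map is `(x, A x) ↦ (A - i) x`. -/
noncomputable def sndSubIFst (H : Type*) [NormedAddCommGroup H] [InnerProductSpace ℂ H] :
    H × H →L[ℂ] H :=
  ContinuousLinearMap.snd ℂ H H - I • ContinuousLinearMap.fst ℂ H H

section SelfAdjoint

variable {H : Type*} [NormedAddCommGroup H] [InnerProductSpace ℂ H]

theorem sndSubIFst_apply (p : H × H) : sndSubIFst H p = p.2 - I • p.1 := rfl

theorem norm_sub_I_smul_sq {x y : H} (h : (⟪y, x⟫_ℂ).im = 0) :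
    ‖y - I • x‖ ^ 2 = ‖y‖ ^ 2 + ‖x‖ ^ 2 := by
  rw [@norm_sub_sq ℂ, inner_smul_right, RCLike.re_to_complex, I_mul_re, h, norm_smul, norm_I,
    one_mul]
  ring

theorem LinearPMap.IsFormalAdjoint.im_inner_eq_zero {A : H →ₗ.[ℂ] H} (hA : A.IsFormalAdjoint A)
    {p : H × H} (hp : p ∈ A.graph) : (⟪p.2, p.1⟫_ℂ).im = 0 := by
  obtain ⟨x, hx1, hx2⟩ := A.mem_graph_iff.1 hp
  rw [← hx1, ← hx2, ← conj_eq_iff_im, inner_conj_symm]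
  exact (hA x x).symm

theorem LinearPMap.IsFormalAdjoint.norm_le_norm_sndSubIFst {A : H →ₗ.[ℂ] H}
    (hA : A.IsFormalAdjoint A) {p : H × H} (hp : p ∈ A.graph) : ‖p‖ ≤ ‖sndSubIFst H p‖ := by
  have hsq := norm_sub_I_smul_sq (hA.im_inner_eq_zero hp)
  rw [← sndSubIFst_apply] at hsq
  refine (Prod.norm_def p).symm ▸ max_le ?_ ?_ <;>
    refine (pow_le_pow_iff_left₀ (norm_nonneg _) (norm_nonneg _) two_ne_zero).1 ?_ <;>
    nlinarith [sq_nonneg ‖p.1‖, sq_nonneg ‖p.2‖]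

variable [CompleteSpace H] {A : H →ₗ.[ℂ] H}

theorem IsSelfAdjoint.isFormalAdjoint (hA : IsSelfAdjoint A) : A.IsFormalAdjoint A := by
  have := adjoint_isFormalAdjoint hA.dense_domain (T := A)
  rwa [isSelfAdjoint_def.1 hA] at this

/-- The range of `A - i` is the whole space. -/
theorem IsSelfAdjoint.map_graph_sndSubIFst_eq_top (hA : IsSelfAdjoint A) :
    A.graph.map (sndSubIFst H : H × H →ₗ[ℂ] H) = ⊤ := by
  have hclosed := isClosed_map_of_le_norm hA.isClosed (sndSubIFst H) (K := 1) fun p hp => by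
    simpa using hA.isFormalAdjoint.norm_le_norm_sndSubIFst hp
  have : CompleteSpace (A.graph.map (sndSubIFst H : H × H →ₗ[ℂ] H)) := hclosed.completeSpace_coe
  refine orthogonal_eq_bot_iff.1 <| (Submodule.eq_bot_iff _).2 fun y hy => ?_
  -- `y ⊥ (A - i) x` for all `x` says that `A† y = -i y`; then `⟪A y, y⟫ = i ‖y‖²` must be real
  have hAx : ∀ x : A.domain, ⟪-I • y, (x : H)⟫_ℂ = ⟪y, A x⟫_ℂ := fun x => by
    have h := inner_left_of_mem_orthogonal (K := A.graph.map (sndSubIFst H : H × H →ₗ[ℂ] H))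
      (mem_map_of_mem (A.mem_graph x)) hy
    rw [ContinuousLinearMap.coe_coe, sndSubIFst_apply, inner_sub_right, inner_smul_right,
      sub_eq_zero] at h
    rw [inner_smul_left, conj_neg_I, h]
  have hy_dom : y ∈ A†.domain := mem_adjoint_domain_of_exists y ⟨_, hAx⟩
  have hgraph : (y, -I • y) ∈ A.graph := by
    rw [← isSelfAdjoint_def.1 hA, mem_graph_iff]
    exact ⟨⟨y, hy_dom⟩, rfl, adjoint_apply_eq hA.dense_domain _ hAx⟩
  have him := hA.isFormalAdjoint.im_inner_eq_zero hgraph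
  rw [inner_smul_left, conj_neg_I] at him
  simpa [I_mul_im, ← ofReal_pow] using him

end SelfAdjoint

theorem stmt4_general {H : Type*} [NormedAddCommGroup H] [InnerProductSpace ℂ H]
    [CompleteSpace H]
    (A : H →ₗ.[ℂ] H) (hA : IsSelfAdjoint A)
    (v : ℕ → H) (hv : ∀ k, (v k, v (k + 1)) ∈ A.graph)
    (hcyc : Dense (↑(Submodule.span ℂ (Set.range v)) : Set H))
    (P : ℕ → Polynomial ℝ) (hdeg : ∀ k, (P k).natDegree = k)
    (hlead : ∀ k, 0 < (P k).leadingCoeff)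
    (δs : ℕ → H)
    (hδs : ∀ k, δs k = ∑ j ∈ Finset.range (k + 1), ((P k).coeff j : ℂ) • v j)
    (hON : Orthonormal ℂ δs) :
    IsBasisOfRepresentation A δs ↔
      Dense (↑(Submodule.span ℂ
        (Set.range fun k : ℕ => v (k + 1) - Complex.I • v k)) : Set H) := by
  set c : ℕ → ℕ → ℂ := fun k j => ((P k).coeff j : ℂ)
  have hc : ∀ k, c k k ≠ 0 := fun k => by
    have hkk := (P k).coeff_natDegree
    rw [hdeg k] at hkk
    exact ofReal_ne_zero.2 (hkk ▸ (hlead k).ne')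
  set u : ℕ → H × H := fun k => (v k, v (k + 1))
  set e : ℕ → H × H := fun k => ∑ j ∈ Finset.range (k + 1), c k j • u j
  have he : ∀ k, e k ∈ A.graph := fun k => sum_mem fun j _ => smul_mem _ _ (hv j)
  have he_fst : ∀ k, (e k).1 = δs k := fun k => by simp [e, u, c, hδs k, Prod.fst_sum]
  have hspan : span ℂ (range e) = span ℂ (range u) :=
    span_range_eq_of_triangular u e c hc fun _ => rfl
  have hgA : span ℂ (range u) ≤ A.graph := span_le.2 <| range_subset_iff.2 hv
  have hmap : (span ℂ (range u)).map (sndSubIFst H : H × H →ₗ[ℂ] H) =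
      span ℂ (range fun k => v (k + 1) - I • v k) := by
    rw [map_span, ← range_comp]; rfl
  have hbasis : IsBasisOfRepresentation A δs ↔
      ∀ B : H →ₗ.[ℂ] H, B.IsClosed → span ℂ (range u) ≤ B.graph → A ≤ B := by
    have hdense : Dense (span ℂ (range δs) : Set H) := by
      rwa [span_range_eq_of_triangular v δs c hc hδs]
    have hdom : ∀ k, δs k ∈ A.domain := fun k => he_fst k ▸ mem_domain_of_mem_graph (he k)
    refine (and_iff_right hON).trans <| (and_iff_right hdense).trans <|
      (and_iff_right hdom).trans <| forall_congr' fun B => imp_congr_right fun _ => ?_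
    rw [← hspan, span_range_le_graph_iff he]
    simp only [he_fst]
  rw [hbasis, ← graph_le_topologicalClosure_iff hA.isClosed hgA, ← hmap]
  exact le_topologicalClosure_iff_dense_map hA.isClosed hgA (sndSubIFst H) (K := 1)
    (fun p hp => by simpa using hA.isFormalAdjoint.norm_le_norm_sndSubIFst hp)
    hA.map_graph_sndSubIFst_eq_top

/-- Let `A` be a simple selfadjoint operator and `δ` a cyclic vector
of it (chain `v k = A^k δ` with dense span of the orbit).  The orthonormal basis
`δs` obtained by the Gram–Schmidt procedure from `(A^k δ)` (so `δs k = P_k(A) δ`,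
`P_k` real of degree `k` with positive leading coefficient) is a basis of
representation for `A` if and only if the closed linear span of
`{(A - iI) A^k δ : k ≥ 0}` is the whole Hilbert space. -/
theorem stmt4 {H : Type*} [NormedAddCommGroup H] [InnerProductSpace ℂ H]
    [CompleteSpace H]
    (A : H →ₗ.[ℂ] H) (hA : IsSelfAdjoint A)
    (δ : H) (v : ℕ → H) (hv0 : v 0 = δ) (hv : ∀ k, (v k, v (k + 1)) ∈ A.graph)
    (hcyc : Dense (↑(Submodule.span ℂ (Set.range v)) : Set H))
    (P : ℕ → Polynomial ℝ) (hdeg : ∀ k, (P k).natDegree = k)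
    (hlead : ∀ k, 0 < (P k).leadingCoeff)
    (δs : ℕ → H)
    (hδs : ∀ k, δs k = ∑ j ∈ Finset.range (k + 1), ((P k).coeff j : ℂ) • v j)
    (hON : Orthonormal ℂ δs) :
    IsBasisOfRepresentation A δs ↔
      Dense (↑(Submodule.span ℂ
        (Set.range fun k : ℕ => v (k + 1) - Complex.I • v k)) : Set H) :=
  stmt4_general A hA v hv hcyc P hdeg hlead δs hδs hON
end

section
/- Let \mu be a finite Borel measure with infinite support that solves an indeterminate Hamburger moment problem, given by \mu(\partial) = \langle \delta_1, E(\partial)\delta_1 \rangle for the spectral measure E of a canonical selfadjoint extension of a nonselfadjoint Jacobi operator. Define \nu_1(\partial) = C^{-1}\int_\partial (1+x^2)^{-1} d\mu(x) with C = \int_{\mathbb{R}}(1+x^2)^{-1} d\mu. Let \{R_{k-1}\} be the orthonormal polynomials in L_2(\mathbb{R},\nu_1), and put f_{k-1}(t) = (\sqrt{C}(t-i))^{-1} R_{k-1}(t). Then \{f_{k-1}\}_{k=1}^\infty is an orthonormal basis of L_2(\mathbb{R},\mu) and each f_{k-1} lies in the domain of the multiplication operator M_\mu. -/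
/-!
With `w t = √C (t - i)` we have `|w t|² = C (1 + t²)`, so `f ↦ f / w` carries `L₂(ν₁)` isometrically
into `L₂(μ)`; this gives orthonormality. The span of the `f_k` is `{p / w : p polynomial}`, since
the `R_k` (of exact degree `k`) span all polynomials; it contains every polynomial `p = (w p) / w`,
hence is dense. Finally `t / w t` is bounded, so `t f_k(t)` is again square integrable.
-/

open MeasureTheory Polynomial Complex

lemma eval_map_algebraMap_ofReal (p : ℝ[X]) (t : ℝ) :
    (p.map (algebraMap ℝ ℂ)).eval (t : ℂ) = ((p.eval t : ℝ) : ℂ) := by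
  rw [eval_map_algebraMap]
  exact (ofReal_eval (K := ℂ) p t).symm

lemma norm_inv_ofReal_sub_I_le_one (t : ℝ) : ‖((t : ℂ) - I)⁻¹‖ ≤ 1 := by
  rw [norm_inv]
  exact inv_le_one_of_one_le₀ (by simpa using abs_im_le_norm ((t : ℂ) - I))

lemma conj_inv_mul_mul_inv_mul (c : ℂ) (t a b : ℝ) :
    (starRingEnd ℂ) ((c * ((t : ℂ) - I))⁻¹ * a) * ((c * ((t : ℂ) - I))⁻¹ * b) =
      (((‖c‖ ^ 2 * (1 + t ^ 2))⁻¹ * (a * b) : ℝ) : ℂ) := by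
  have hw : normSq (c * ((t : ℂ) - I)) = ‖c‖ ^ 2 * (1 + t ^ 2) := by
    rw [normSq_mul, normSq_eq_norm_sq c, normSq_apply]
    simp only [sub_re, ofReal_re, I_re, sub_im, ofReal_im, I_im]
    ring
  rw [← hw]
  generalize c * ((t : ℂ) - I) = w
  rw [ofReal_mul, ofReal_inv, normSq_eq_conj_mul_self, map_mul, map_inv₀, conj_ofReal]
  push_cast
  ring

lemma integral_inv_ofReal_smul_withDensity_ofReal {α : Type*} [MeasurableSpace α]
    {μ : Measure α} {C : ℝ} (hC : 0 ≤ C) {w : α → ℝ} (hw : Measurable w) (hw0 : ∀ x, 0 ≤ w x)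
    (f : α → ℝ) :
    ∫ x, f x ∂((ENNReal.ofReal C)⁻¹ • μ.withDensity fun x => ENNReal.ofReal (w x)) =
      ∫ x, C⁻¹ * w x * f x ∂μ := by
  rw [integral_smul_measure, integral_withDensity_eq_integral_toReal_smul hw.ennreal_ofReal
    (by simp), ENNReal.toReal_inv, ENNReal.toReal_ofReal hC, smul_eq_mul, ← integral_const_mul]
  simp only [ENNReal.toReal_ofReal (hw0 _), smul_eq_mul, mul_assoc]

section

variable {μ : Measure ℝ} (hmom : ∀ k : ℕ, Integrable (fun x : ℝ => x ^ k) μ)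
include hmom

lemma memLp_two_eval_of_integrable_pow (q : ℂ[X]) :
    MemLp (fun t : ℝ => q.eval (t : ℂ)) 2 μ := by
  induction q using Polynomial.induction_on' with
  | add p q hp hq => simp only [eval_add]; exact hp.add hq
  | monomial n c =>
    have hX : MemLp (fun t : ℝ => (t : ℂ) ^ n) 2 μ := by
      rw [memLp_two_iff_integrable_sq_norm (by fun_prop)]
      refine (hmom (2 * n)).congr (.of_forall fun t => ?_)
      dsimp only
      rw [norm_pow, norm_real, Real.norm_eq_abs, ← abs_pow, sq_abs, pow_mul']
    simpa only [eval_monomial] using hX.const_mul c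

lemma memLp_two_inv_mul_eval (c : ℂ) (q : ℂ[X]) :
    MemLp (fun t : ℝ => (c * ((t : ℂ) - I))⁻¹ * q.eval (t : ℂ)) 2 μ := by
  refine (memLp_two_eval_of_integrable_pow hmom q).of_le_mul (c := ‖c‖⁻¹) (by fun_prop)
    (.of_forall fun t => ?_)
  rw [mul_inv, norm_mul, norm_mul, norm_inv c]
  gcongr
  exact mul_le_of_le_one_right (by positivity) (norm_inv_ofReal_sub_I_le_one t)

lemma memLp_two_ofReal_mul_inv_mul_eval (c : ℂ) (q : ℂ[X]) :
    MemLp (fun t : ℝ => (t : ℂ) * ((c * ((t : ℂ) - I))⁻¹ * q.eval (t : ℂ))) 2 μ := by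
  convert memLp_two_inv_mul_eval hmom c (X * q) using 2 with t
  rw [eval_mul, eval_X, mul_left_comm]

noncomputable def resolventLp (c : ℂ) : ℂ[X] →ₗ[ℂ] Lp ℂ 2 μ where
  toFun q := (memLp_two_inv_mul_eval hmom c q).toLp
  map_add' p q := by
    rw [← MemLp.toLp_add]
    exact MemLp.toLp_congr _ _ (.of_forall fun t => by simp [mul_add])
  map_smul' a q := by
    rw [← MemLp.toLp_const_smul]
    exact MemLp.toLp_congr _ _ (.of_forall fun t => by simp [mul_left_comm])

lemma coeFn_resolventLp (c : ℂ) (q : ℂ[X]) :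
    resolventLp hmom c q =ᵐ[μ] fun t : ℝ => (c * ((t : ℂ) - I))⁻¹ * q.eval (t : ℂ) :=
  MemLp.coeFn_toLp (memLp_two_inv_mul_eval hmom c q)

lemma inner_resolventLp_map_algebraMap (c : ℂ) (p q : ℝ[X]) :
    inner ℂ (resolventLp hmom c (p.map (algebraMap ℝ ℂ)))
        (resolventLp hmom c (q.map (algebraMap ℝ ℂ))) =
      ((∫ t, (‖c‖ ^ 2 * (1 + t ^ 2))⁻¹ * (p.eval t * q.eval t) ∂μ : ℝ) : ℂ) := by
  rw [L2.inner_def, ← integral_complex_ofReal]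
  refine integral_congr_ae ?_
  filter_upwards [coeFn_resolventLp hmom c (p.map _), coeFn_resolventLp hmom c (q.map _)]
    with t hp hq
  rw [RCLike.inner_apply', hp, hq, eval_map_algebraMap_ofReal, eval_map_algebraMap_ofReal,
    conj_inv_mul_mul_inv_mul]

lemma setOf_polynomial_subset_range_resolventLp {c : ℂ} (hc : c ≠ 0) :
    {f : Lp ℂ 2 μ | ∃ p : ℂ[X], (f : ℝ → ℂ) =ᵐ[μ] fun t : ℝ => p.eval (t : ℂ)} ⊆
      LinearMap.range (resolventLp hmom c) := by
  rintro f ⟨p, hf⟩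
  refine ⟨C c * (X - C I) * p, Lp.ext <| (coeFn_resolventLp hmom c _).trans <|
    .trans (.of_forall fun t => ?_) hf.symm⟩
  have ht : (t : ℂ) - I ≠ 0 := sub_ne_zero.mpr fun h => by simpa using congrArg im h
  simp only [eval_mul, eval_sub, eval_C, eval_X]
  exact inv_mul_cancel_left₀ (mul_ne_zero hc ht) _

end

theorem stmt9_general (μ : Measure ℝ)
    (hmom : ∀ k : ℕ, Integrable (fun x : ℝ => x ^ k) μ)
    (hpolydense : Dense {f : Lp ℂ 2 μ | ∃ p : Polynomial ℂ,
      (f : ℝ → ℂ) =ᵐ[μ] fun t : ℝ => p.eval (t : ℂ)})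
    (Cmu : ℝ) (hC : Cmu = ∫ x : ℝ, (1 + x ^ 2)⁻¹ ∂μ)
    (ν₁ : Measure ℝ)
    (hν₁ : ν₁ = (ENNReal.ofReal Cmu)⁻¹ •
      μ.withDensity fun x => ENNReal.ofReal ((1 + x ^ 2)⁻¹))
    (R : ℕ → Polynomial ℝ)
    (hdeg : ∀ k, (R k).natDegree = k)
    (hRON : ∀ j k, ∫ x : ℝ, (R j).eval x * (R k).eval x ∂ν₁ =
      if j = k then 1 else 0) :
    ∃ F : ℕ → Lp ℂ 2 μ,
      (∀ k, (F k : ℝ → ℂ) =ᵐ[μ]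
        fun t : ℝ => (Real.sqrt Cmu * ((t : ℂ) - Complex.I))⁻¹ * (((R k).eval t : ℝ) : ℂ)) ∧
      Orthonormal ℂ F ∧
      Dense (↑(Submodule.span ℂ (Set.range F)) : Set (Lp ℂ 2 μ)) ∧
      ∀ k, MemLp (fun t : ℝ =>
        (t : ℂ) * ((Real.sqrt Cmu * ((t : ℂ) - Complex.I))⁻¹ * (((R k).eval t : ℝ) : ℂ)))
        2 μ := by
  have hC0 : 0 ≤ Cmu := hC ▸ integral_nonneg fun x => by positivity
  have hν₁_integral (f : ℝ → ℝ) : ∫ x, f x ∂ν₁ = ∫ x, Cmu⁻¹ * (1 + x ^ 2)⁻¹ * f x ∂μ :=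
    hν₁ ▸ integral_inv_ofReal_smul_withDensity_ofReal hC0 (by fun_prop) (fun x => by positivity) f
  -- For `Cmu = 0` the measure `ν₁` is `∞ • _`, whose Bochner integrals all vanish.
  have hCmu : Cmu ≠ 0 := by rintro rfl; simpa [hν₁_integral] using hRON 0 0
  have hR (k : ℕ) : R k ≠ 0 := fun h => by simpa [h] using hRON k k
  let S : Polynomial.Sequence ℂ := ⟨fun k => (R k).map (algebraMap ℝ ℂ), fun k => by
    rw [degree_map, degree_eq_natDegree (hR k), hdeg]⟩
  let Φ := resolventLp hmom (Real.sqrt Cmu : ℂ)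
  refine ⟨Φ ∘ S, fun k => ?_, ?_, ?_, fun k => ?_⟩
  · refine (coeFn_resolventLp hmom _ ((R k).map (algebraMap ℝ ℂ))).trans (.of_forall fun t => ?_)
    simp only [eval_map_algebraMap_ofReal]
  · refine orthonormal_iff_ite.mpr fun j k => ?_
    have hjk := hRON j k
    rw [hν₁_integral] at hjk
    rw [Function.comp_apply, Function.comp_apply, inner_resolventLp_map_algebraMap, norm_real,
      Real.norm_eq_abs, sq_abs, Real.sq_sqrt hC0]
    simp only [mul_inv]
    rw [hjk]
    split_ifs <;> simp
  · rw [Set.range_comp, Submodule.span_image,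
      S.span fun k => (leadingCoeff_ne_zero.mpr (S.ne_zero k)).isUnit, Submodule.map_top]
    exact hpolydense.mono (setOf_polynomial_subset_range_resolventLp hmom
      (ofReal_ne_zero.mpr (Real.sqrt_ne_zero'.mpr (hC0.lt_of_ne' hCmu))))
  · simpa only [eval_map_algebraMap_ofReal] using
      memLp_two_ofReal_mul_inv_mul_eval hmom (Real.sqrt Cmu : ℂ) ((R k).map (algebraMap ℝ ℂ))

/-- Let `μ` be a finite Borel measure with infinite support and all
moments finite, solving an indeterminate Hamburger moment problem, and extremal, i.e.
the polynomials are dense in `L₂(ℝ,μ)` (this characterizes the measures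
`μ(∂) = ⟪δ₁, E(∂)δ₁⟫` coming from canonical selfadjoint extensions of the
nonselfadjoint Jacobi operator).  Put `C = ∫ (1+x²)⁻¹ dμ`,
`ν₁(∂) = C⁻¹ ∫_∂ (1+x²)⁻¹ dμ`, let `(R k)` be the orthonormal polynomials of
`L₂(ℝ,ν₁)` and `f_k(t) = (√C (t-i))⁻¹ R_k(t)`.  Then `(f_k)` is an orthonormal basis
of `L₂(ℝ,μ)` and each `f_k` lies in the domain of the multiplication operator
`M_μ`. -/
theorem stmt9 (μ : Measure ℝ) [IsFiniteMeasure μ]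
    (hsupp : ∀ s : Set ℝ, μ sᶜ = 0 → s.Infinite)
    (hmom : ∀ k : ℕ, Integrable (fun x : ℝ => x ^ k) μ)
    (hindet : ∃ ν : Measure ℝ, ν ≠ μ ∧ (∀ k : ℕ, Integrable (fun x : ℝ => x ^ k) ν) ∧
      ∀ k : ℕ, ∫ x : ℝ, x ^ k ∂ν = ∫ x : ℝ, x ^ k ∂μ)
    (hpolydense : Dense {f : Lp ℂ 2 μ | ∃ p : Polynomial ℂ,
      (f : ℝ → ℂ) =ᵐ[μ] fun t : ℝ => p.eval (t : ℂ)})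
    (Cmu : ℝ) (hC : Cmu = ∫ x : ℝ, (1 + x ^ 2)⁻¹ ∂μ)
    (ν₁ : Measure ℝ)
    (hν₁ : ν₁ = (ENNReal.ofReal Cmu)⁻¹ •
      μ.withDensity fun x => ENNReal.ofReal ((1 + x ^ 2)⁻¹))
    (R : ℕ → Polynomial ℝ)
    (hdeg : ∀ k, (R k).natDegree = k)
    (hlead : ∀ k, 0 < (R k).leadingCoeff)
    (hRON : ∀ j k, ∫ x : ℝ, (R j).eval x * (R k).eval x ∂ν₁ =
      if j = k then 1 else 0) :
    ∃ F : ℕ → Lp ℂ 2 μ,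
      (∀ k, (F k : ℝ → ℂ) =ᵐ[μ]
        fun t : ℝ => (Real.sqrt Cmu * ((t : ℂ) - Complex.I))⁻¹ * (((R k).eval t : ℝ) : ℂ)) ∧
      Orthonormal ℂ F ∧
      Dense (↑(Submodule.span ℂ (Set.range F)) : Set (Lp ℂ 2 μ)) ∧
      ∀ k, MemLp (fun t : ℝ =>
        (t : ℂ) * ((Real.sqrt Cmu * ((t : ℂ) - Complex.I))⁻¹ * (((R k).eval t : ℝ) : ℂ)))
        2 μ :=
  stmt9_general μ hmom hpolydense Cmu hC ν₁ hν₁ R hdeg hRON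
end
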